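/- arXiv:2407.19499 — 2 statements merged into one kernel-verified Lean document; each statement's English description precedes it below -/
import Mathlib

section
/- With the importance-sampling estimator v defined by sampling k with probability pₖ = ‖Λₖ‖₂/‖Λ‖₁ (where ‖Λ‖₁ = Σⱼ‖Λⱼ‖₂) and setting v = Λₖ(b)/pₖ with b distributed as ⟨b|UₖρUₖ†|b⟩, the second moment satisfies E[v²] ≤ ‖Λ‖₁², and hence Var(v) ≤ ‖Λ‖₁². -/
open Matrix BigOperators
open scoped ComplexOrder

lemma diag_re_nonneg_aux {d : ℕ} {M : Matrix (Fin d) (Fin d) ℂ} (hM : M.PosSemidef)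
    (b : Fin d) : 0 ≤ (M b b).re := by
  have := hM.re_dotProduct_nonneg (Pi.single b 1)
  simpa [Matrix.mulVec_single, dotProduct, Pi.single_apply, Finset.sum_ite_eq] using this

theorem stmt7 {d K : ℕ} (hd : 0 < d)
    (ρ : Matrix (Fin d) (Fin d) ℂ) (hρ : ρ.PosSemidef) (hτ : ρ.trace = 1)
    (Λ : Fin K → Fin d → ℝ)
    (U : Fin K → Matrix (Fin d) (Fin d) ℂ)
    (hU : ∀ k, U k ∈ Matrix.unitaryGroup (Fin d) ℂ)
    (hΛ : ∃ k, Λ k ≠ 0)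
    (p : Fin K → ℝ)
    (hp : ∀ k, p k = (⨆ b, |Λ k b|) / ∑ j, ⨆ b, |Λ j b|) :
    (∑ k, ∑ b, (p k * ((U k * ρ * (U k)ᴴ) b b).re) * (Λ k b / p k) ^ 2
      ≤ (∑ j, ⨆ b, |Λ j b|) ^ 2) ∧
    (∑ k, ∑ b, (p k * ((U k * ρ * (U k)ᴴ) b b).re) * (Λ k b / p k) ^ 2
      - (∑ k, ∑ b, (p k * ((U k * ρ * (U k)ᴴ) b b).re) * (Λ k b / p k)) ^ 2
      ≤ (∑ j, ⨆ b, |Λ j b|) ^ 2) := by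
  haveI : Nonempty (Fin d) := ⟨⟨0, hd⟩⟩
  set S : ℝ := ∑ j, ⨆ b, |Λ j b| with hSdef
  set r : Fin K → Fin d → ℝ := fun k b => ((U k * ρ * (U k)ᴴ) b b).re with hrdef
  have hsup : ∀ k b, |Λ k b| ≤ ⨆ b, |Λ k b| := fun k b =>
    le_ciSup (f := fun b => |Λ k b|) (Set.Finite.bddAbove (Set.finite_range _)) b
  have hsup0 : ∀ k, (0:ℝ) ≤ ⨆ b, |Λ k b| := fun k =>
    le_trans (abs_nonneg _) (hsup k ⟨0, hd⟩)
  have hS : 0 < S := by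
    obtain ⟨k0, hk0⟩ := hΛ
    obtain ⟨b0, hb0⟩ := Function.ne_iff.mp hk0
    refine Finset.sum_pos' (fun k _ => hsup0 k) ⟨k0, Finset.mem_univ _, ?_⟩
    exact lt_of_lt_of_le (abs_pos.mpr hb0) (hsup k0 b0)
  have hpk : ∀ k, 0 ≤ p k := fun k => by
    rw [hp k]; exact div_nonneg (hsup0 k) hS.le
  have hpsum : ∑ k, p k = 1 := by
    simp only [hp]
    rw [← Finset.sum_div, div_self hS.ne']
  have hsupS : ∀ k, (⨆ b, |Λ k b|) = p k * S := fun k => by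
    rw [hp k, div_mul_cancel₀ _ hS.ne']
  -- diagonal entries nonneg
  have hpsd : ∀ k, (U k * ρ * (U k)ᴴ).PosSemidef := fun k =>
    hρ.mul_mul_conjTranspose_same (U k)
  have hr : ∀ k b, 0 ≤ r k b := fun k b => diag_re_nonneg_aux (hpsd k) b
  -- sum of diagonal = 1
  have htr : ∀ k, ∑ b, r k b = 1 := by
    intro k
    have h1 : (U k)ᴴ * U k = 1 := by
      have := (Matrix.mem_unitaryGroup_iff'.mp (hU k))
      simpa [Matrix.star_eq_conjTranspose] using this
    have h2 : (U k * ρ * (U k)ᴴ).trace = 1 := by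
      rw [Matrix.trace_mul_cycle, h1, Matrix.one_mul, hτ]
    have h3 : ∑ b, r k b = ((U k * ρ * (U k)ᴴ).trace).re := by
      simp [hrdef, Matrix.trace, Matrix.diag, Complex.re_sum]
    rw [h3, h2]; rfl
  -- termwise bound
  have hterm : ∀ k b, (p k * r k b) * (Λ k b / p k) ^ 2 ≤ (p k * r k b) * S ^ 2 := by
    intro k b
    rcases eq_or_lt_of_le (hpk k) with h0 | h0
    · simp [← h0]
    · apply mul_le_mul_of_nonneg_left _ (mul_nonneg (hpk k) (hr k b))
      have habs : |Λ k b / p k| ≤ S := by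
        rw [abs_div, abs_of_pos h0, div_le_iff₀ h0]
        calc |Λ k b| ≤ ⨆ b, |Λ k b| := hsup k b
          _ = p k * S := hsupS k
          _ = S * p k := mul_comm _ _
      calc (Λ k b / p k) ^ 2 = |Λ k b / p k| ^ 2 := (sq_abs _).symm
        _ ≤ S ^ 2 := pow_le_pow_left₀ (abs_nonneg _) habs 2
  have hmain : ∑ k, ∑ b, (p k * r k b) * (Λ k b / p k) ^ 2 ≤ S ^ 2 := by
    calc ∑ k, ∑ b, (p k * r k b) * (Λ k b / p k) ^ 2
        ≤ ∑ k, ∑ b, (p k * r k b) * S ^ 2 :=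
          Finset.sum_le_sum fun k _ => Finset.sum_le_sum fun b _ => hterm k b
      _ = ∑ k, p k * S ^ 2 := by
          refine Finset.sum_congr rfl fun k _ => ?_
          rw [show (∑ b, (p k * r k b) * S ^ 2) = (p k * S ^ 2) * ∑ b, r k b from by
            rw [Finset.mul_sum]; exact Finset.sum_congr rfl fun b _ => by ring]
          rw [htr k, mul_one]
      _ = S ^ 2 := by rw [← Finset.sum_mul, hpsum, one_mul]
  exact ⟨hmain, le_trans (sub_le_self _ (sq_nonneg _)) hmain⟩
end

section
/- Let H be a traceless Hermitian matrix, let δ > 0, and suppose that for each t = 1,…,T a unit vector ψ_t satisfies ⟨ψ_t|H|ψ_t⟩² ≤ δ. Let a > 0 with 9a²δ ≤ 0.79 and 3a‖H‖₂ ≤ 1. Then E_x[∏_{t=1}^T (1 + 3a·x·⟨ψ_t|H|ψ_t⟩)] ≥ exp(−9a²Tδ) ≥ 1 − 9Ta²δ, where x is uniform on {+1, −1}. -/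
open Matrix BigOperators

noncomputable def specNorm {d : ℕ} (A : Matrix (Fin d) (Fin d) ℂ) : ℝ :=
  ‖Matrix.toEuclideanCLM (𝕜 := ℂ) A‖

/-!
Averaging over `x = ±1` is bounded below by the geometric mean (Jensen for `exp` at two points):
`(P + Q) / 2 ≥ √(P Q)` with `P Q = ∏ₜ (1 - 9 a² cₜ²)`. Each factor is at least
`1 - 9 a² δ ≥ exp (-18 a² δ)`, since `log (1 - u) ≥ -2u` for `u ∈ [0, 0.79]`; the same bound
`9 a² cₜ² ≤ 0.79 < 1` makes all factors `1 ± 3 a cₜ` nonnegative.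
-/

open Finset

/-- The constant `0.79` is close to optimal: `1 - u - exp (-2u)` changes sign near `u = 0.797`. -/
lemma Real.exp_neg_two_mul_le_one_sub {u : ℝ} (h0 : 0 ≤ u) (h1 : u ≤ 0.79) :
    Real.exp (-(2 * u)) ≤ 1 - u := by
  set S := 1 + 2 * u + 2 * u ^ 2 + (4 / 3) * u ^ 3 + (2 / 3) * u ^ 4 + (4 / 15) * u ^ 5 with hS_def
  have hS : S ≤ Real.exp (2 * u) := by
    have := Real.sum_le_exp_of_nonneg (x := 2 * u) (by linarith) 6
    simp only [sum_range_succ, sum_range_zero, Nat.factorial] at this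
    norm_num at this
    linarith [hS_def]
  have hS_pos : 0 < S := by positivity
  calc Real.exp (-(2 * u)) = (Real.exp (2 * u))⁻¹ := Real.exp_neg _
    _ ≤ S⁻¹ := inv_anti₀ hS_pos hS
    _ ≤ 1 - u := by
      rw [inv_le_iff_one_le_mul₀ hS_pos, hS_def]
      nlinarith [pow_nonneg h0 3, pow_nonneg h0 4, pow_nonneg h0 5, sq_nonneg u]

lemma le_add_div_two_of_sq_le_mul {e P Q : ℝ} (hP : 0 ≤ P) (hQ : 0 ≤ Q) (h : e ^ 2 ≤ P * Q) :
    e ≤ (P + Q) / 2 := by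
  nlinarith [sq_nonneg (P - Q)]

lemma exp_neg_mul_card_le_avg_prod_one_add_one_sub {ι : Type*} [Fintype ι] (x : ι → ℝ) {u : ℝ}
    (hx : ∀ i, x i ^ 2 ≤ u) (hu : u ≤ 0.79) :
    Real.exp (-(u * Fintype.card ι)) ≤
      (1 / 2) * ∏ i, (1 + x i) + (1 / 2) * ∏ i, (1 - x i) := by
  have hx_abs : ∀ i, |x i| ≤ 1 := fun i =>
    (sq_le_one_iff_abs_le_one _).1 (by linarith [hx i])
  have hP : 0 ≤ ∏ i, (1 + x i) :=
    prod_nonneg fun i _ => by linarith [(abs_le.1 (hx_abs i)).1]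
  have hQ : 0 ≤ ∏ i, (1 - x i) :=
    prod_nonneg fun i _ => by linarith [(abs_le.1 (hx_abs i)).2]
  have hPQ : Real.exp (-(u * Fintype.card ι)) ^ 2 ≤ (∏ i, (1 + x i)) * ∏ i, (1 - x i) :=
    calc Real.exp (-(u * Fintype.card ι)) ^ 2 = ∏ _i : ι, Real.exp (-(2 * u)) := by
          rw [prod_const, card_univ, ← Real.exp_nat_mul, ← Real.exp_nat_mul]
          ring_nf
      _ ≤ ∏ i, (1 - x i ^ 2) := prod_le_prod (fun _ _ => (Real.exp_pos _).le) fun i _ =>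
          (Real.exp_neg_two_mul_le_one_sub ((sq_nonneg _).trans (hx i)) hu).trans
            (by linarith [hx i])
      _ = (∏ i, (1 + x i)) * ∏ i, (1 - x i) := by
          rw [← prod_mul_distrib]
          exact prod_congr rfl fun i _ => by ring
  linarith [le_add_div_two_of_sq_le_mul hP hQ hPQ]

theorem stmt11_general {T : ℕ} (δ a : ℝ)
    (c : Fin T → ℝ)
    (hcδ : ∀ t, (c t) ^ 2 ≤ δ)
    (ha1 : 9 * a ^ 2 * δ ≤ 0.79) :
    Real.exp (-(9 * a ^ 2 * T * δ)) ≤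
      (1 / 2) * ∏ t, (1 + 3 * a * c t) + (1 / 2) * ∏ t, (1 - 3 * a * c t) ∧
    1 - 9 * T * a ^ 2 * δ ≤ Real.exp (-(9 * a ^ 2 * T * δ)) := by
  have hx : ∀ t, (3 * a * c t) ^ 2 ≤ 9 * a ^ 2 * δ := fun t => by
    nlinarith [hcδ t, sq_nonneg a]
  have hT : 9 * a ^ 2 * T * δ = 9 * a ^ 2 * δ * Fintype.card (Fin T) := by
    rw [Fintype.card_fin]; ring
  refine ⟨?_, ?_⟩
  · rw [hT]
    exact exp_neg_mul_card_le_avg_prod_one_add_one_sub (fun t => 3 * a * c t) hx ha1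
  · exact (le_of_eq (by ring)).trans (Real.one_sub_le_exp_neg _)

theorem stmt11 {d T : ℕ} (H : Matrix (Fin d) (Fin d) ℂ) (hH : H.IsHermitian)
    (htr : H.trace = 0) (δ a : ℝ) (hδ : 0 < δ)
    (ψ : Fin T → EuclideanSpace ℂ (Fin d)) (hψ : ∀ t, ‖ψ t‖ = 1)
    (c : Fin T → ℝ)
    (hc : ∀ t, (c t : ℂ) = inner ℂ (ψ t) (Matrix.toEuclideanCLM (𝕜 := ℂ) H (ψ t)))
    (hcδ : ∀ t, (c t) ^ 2 ≤ δ)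
    (ha : 0 < a) (ha1 : 9 * a ^ 2 * δ ≤ 0.79) (ha2 : 3 * a * specNorm H ≤ 1) :
    Real.exp (-(9 * a ^ 2 * T * δ)) ≤
      (1 / 2) * ∏ t, (1 + 3 * a * c t) + (1 / 2) * ∏ t, (1 - 3 * a * c t) ∧
    1 - 9 * T * a ^ 2 * δ ≤ Real.exp (-(9 * a ^ 2 * T * δ)) :=
  stmt11_general δ a c hcδ ha1
end
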